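/- arXiv:2312.01475 — 3 statements merged into one kernel-verified Lean document; each statement's English description precedes it below -/
import Mathlib

section
/- Let Z₀(s) = (16 − 16s²)/(1+s²)³ for s ≥ 0, and for x > 0 let Ei(−x) = −∫_x^∞ e^{−t} t^{−1} dt denote the exponential integral. There exists C > 0 such that for every a ≥ 2, | ∫₀^∞ e^{−u²/4} Z₀(ua) u du + (2/a⁴)(Ei(−1/(4a²)) + 1) | ≤ C a^{−6} log a. -/
/-!
Substituting `w = a²u²` turns the integral into the Laplace transform at `ε = 1/(4a²)` of
`w ↦ (16 - 16w)/(1 + w)³`, which is the derivative of `16w/(1 + w)²`. Integrating by parts expresses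
it through `L(ε) = ∫₀^∞ e^{-εw}/(1 + w) dw`, and the substitution `t = ε(1 + w)` gives
`Ei(-ε) = -e^{-ε} L(ε)`. The left-hand side therefore collapses to `(2/a⁴) L(ε) (1 + ε - e^{-ε})`.
Finally `0 ≤ 1 + ε - e^{-ε} ≤ 2ε`, and splitting the integral at `w = 1/ε` gives
`L(ε) ≤ log(1 + 1/ε) + 1 = O(log a)`.
-/

noncomputable section

open MeasureTheory Real Filter Set Topology

/-- the radial profile `Z₀(s) = (16 − 16s²)/(1+s²)³`. -/
def Z0r (s : ℝ) : ℝ := (16 - 16 * s ^ 2) / (1 + s ^ 2) ^ 3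

/-- `EiNeg x = Ei(−x) = −∫_x^∞ e^{−t}/t dt` for `x > 0`. -/
def EiNeg (x : ℝ) : ℝ := -∫ t in Ioi x, Real.exp (-t) / t

theorem integral_comp_add_right_Ioi {E : Type*} [NormedAddCommGroup E] [NormedSpace ℝ E]
    (f : ℝ → E) (a c : ℝ) : ∫ x in Ioi a, f (x + c) = ∫ x in Ioi (a + c), f x := by
  rw [← integral_indicator measurableSet_Ioi, ← integral_indicator measurableSet_Ioi,
    ← integral_add_right_eq_self (indicator (Ioi (a + c)) f) c]
  congr 1 with x
  simp [indicator]

theorem integrableOn_Ioi_exp_neg_mul_mul {ε c C : ℝ} (hε : 0 < ε) {g : ℝ → ℝ}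
    (hg : ContinuousOn g (Ioi c)) (hbd : ∀ w ∈ Ioi c, |g w| ≤ C) :
    IntegrableOn (fun w => exp (-(ε * w)) * g w) (Ioi c) := by
  simp_rw [← neg_mul]
  exact (exp_neg_integrableOn_Ioi c hε).mul_bdd (hg.aestronglyMeasurable measurableSet_Ioi)
    ((ae_restrict_mem measurableSet_Ioi).mono hbd)

/-- `Z0r s = Z0rSq (s ^ 2)`. -/
def Z0rSq (w : ℝ) : ℝ := (16 - 16 * w) / (1 + w) ^ 3

/-- `L(ε) = e^ε E₁(ε)`, where `E₁(ε) = -Ei(-ε)`. -/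
def laplaceRecipOneAdd (ε : ℝ) : ℝ := ∫ w in Ioi 0, exp (-(ε * w)) / (1 + w)

theorem integrableOn_laplaceRecipOneAdd {ε : ℝ} (hε : 0 < ε) :
    IntegrableOn (fun w => exp (-(ε * w)) / (1 + w)) (Ioi 0) := by
  simp_rw [div_eq_mul_inv]
  refine integrableOn_Ioi_exp_neg_mul_mul hε (C := 1) ?_ fun w (hw : 0 < w) => ?_
  · exact (continuousOn_const.add continuousOn_id).inv₀ fun w (hw : 0 < w) =>
      (add_pos one_pos hw).ne'
  · rw [abs_inv, abs_of_pos (by positivity)]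
    exact inv_le_one_of_one_le₀ (by linarith)

theorem integrableOn_exp_neg_mul_Z0rSq {ε : ℝ} (hε : 0 < ε) :
    IntegrableOn (fun w => exp (-(ε * w)) * Z0rSq w) (Ioi 0) := by
  refine integrableOn_Ioi_exp_neg_mul_mul hε (C := 16) ?_ fun w (hw : 0 < w) => ?_
  · exact ContinuousOn.div (by fun_prop) (by fun_prop) fun w (hw : 0 < w) => by positivity
  · have hd : (0 : ℝ) < (1 + w) ^ 3 := by positivity
    rw [Z0rSq, abs_div, abs_of_pos hd, div_le_iff₀ hd, abs_le]
    constructor <;> nlinarith [pow_pos hw 2, pow_pos hw 3]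

theorem laplaceRecipOneAdd_nonneg (ε : ℝ) : 0 ≤ laplaceRecipOneAdd ε :=
  setIntegral_nonneg measurableSet_Ioi fun w (hw : 0 < w) => by positivity

theorem integral_exp_neg_div_Ioi {ε : ℝ} (hε : 0 < ε) :
    ∫ t in Ioi ε, exp (-t) / t = exp (-ε) * laplaceRecipOneAdd ε := by
  have hscale := integral_comp_mul_left_Ioi' (fun t => exp (-t) / t) 1 hε
  rw [mul_one, ← zero_add (1 : ℝ), ← integral_comp_add_right_Ioi, smul_eq_mul,
    ← integral_const_mul] at hscale
  rw [← hscale, laplaceRecipOneAdd, ← integral_const_mul]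
  refine setIntegral_congr_fun measurableSet_Ioi fun w (hw : 0 < w) => ?_
  rw [show -(ε * (w + 1)) = -ε + -(ε * w) by ring, exp_add]
  field_simp
  ring

def expZ0rSqPrimitive (ε w : ℝ) : ℝ :=
  exp (-(ε * w)) * (16 * w / (1 + w) ^ 2 + 16 * ε / (1 + w))

theorem hasDerivAt_expZ0rSqPrimitive (ε : ℝ) {w : ℝ} (hw : 1 + w ≠ 0) :
    HasDerivAt (expZ0rSqPrimitive ε)
      (exp (-(ε * w)) * Z0rSq w - 16 * ε * (1 + ε) * (exp (-(ε * w)) / (1 + w))) w := by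
  have hlin : HasDerivAt (fun w : ℝ => 1 + w) 1 w := (hasDerivAt_id w).const_add 1
  have hexp : HasDerivAt (fun w => exp (-(ε * w))) (exp (-(ε * w)) * -(ε * 1)) w :=
    ((hasDerivAt_id w).const_mul ε).neg.exp
  have hfrac := (((hasDerivAt_id w).const_mul 16).div (hlin.pow 2) (pow_ne_zero 2 hw)).add
    ((hasDerivAt_const w (16 * ε)).div hlin hw)
  refine (hexp.mul hfrac).congr_deriv ?_
  simp only [Z0rSq, id, Pi.add_apply, Pi.div_apply, Pi.pow_apply, Nat.cast_ofNat]
  field_simp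
  ring

theorem tendsto_expZ0rSqPrimitive_atTop {ε : ℝ} (hε : 0 < ε) :
    Tendsto (expZ0rSqPrimitive ε) atTop (𝓝 0) := by
  have hexp : Tendsto (fun w => (16 + 16 * ε) * exp (-(ε * w))) atTop (𝓝 0) := by
    simpa using (tendsto_exp_neg_atTop_nhds_zero.comp
      (tendsto_id.const_mul_atTop hε)).const_mul (16 + 16 * ε)
  refine squeeze_zero_norm' ?_ hexp
  filter_upwards [eventually_ge_atTop 0] with w hw
  have hw1 : 0 < 1 + w := by linarith
  have h1 : 16 * w / (1 + w) ^ 2 ≤ 16 := by rw [div_le_iff₀ (by positivity)]; nlinarith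
  have h2 : 16 * ε / (1 + w) ≤ 16 * ε := div_le_self (by positivity) (by linarith)
  rw [expZ0rSqPrimitive, norm_mul, norm_of_nonneg (exp_pos _).le, norm_of_nonneg (by positivity), mul_comm]
  gcongr

theorem integral_exp_neg_mul_Z0rSq {ε : ℝ} (hε : 0 < ε) :
    ∫ w in Ioi 0, exp (-(ε * w)) * Z0rSq w
      = 16 * ε * (1 + ε) * laplaceRecipOneAdd ε - 16 * ε := by
  have hftc := integral_Ioi_of_hasDerivAt_of_tendsto'
    (fun w (hw : 0 ≤ w) => hasDerivAt_expZ0rSqPrimitive ε (by positivity))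
    ((integrableOn_exp_neg_mul_Z0rSq hε).sub
      ((integrableOn_laplaceRecipOneAdd hε).const_mul _))
    (tendsto_expZ0rSqPrimitive_atTop hε)
  rw [integral_sub (integrableOn_exp_neg_mul_Z0rSq hε)
    ((integrableOn_laplaceRecipOneAdd hε).const_mul _), integral_const_mul] at hftc
  rw [laplaceRecipOneAdd]
  simp only [expZ0rSqPrimitive, mul_zero, neg_zero, exp_zero, zero_add, zero_div, one_mul]
    at hftc
  linarith

theorem integral_exp_neg_sq_mul_Z0r_mul {a : ℝ} (ha : a ≠ 0) :
    ∫ u in Ioi 0, exp (-(u ^ 2) / 4) * Z0r (u * a) * u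
      = (2 * a ^ 2)⁻¹ * ∫ w in Ioi 0, exp (-(1 / (4 * a ^ 2) * w)) * Z0rSq w := by
  set g : ℝ → ℝ := fun w => exp (-(1 / (4 * a ^ 2) * w)) * Z0rSq w
  have hscale := integral_comp_mul_left_Ioi g 0 (pow_pos (abs_pos.2 ha) 2)
  rw [mul_zero, sq_abs, ← integral_comp_rpow_Ioi_of_pos two_pos, smul_eq_mul] at hscale
  rw [mul_inv, mul_assoc, ← hscale, ← integral_const_mul]
  refine setIntegral_congr_fun measurableSet_Ioi fun u (hu : 0 < u) => ?_
  rw [show (2 : ℝ) - 1 = 1 by norm_num, rpow_one, rpow_two, smul_eq_mul]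
  simp only [g, Z0r, Z0rSq]
  field_simp

theorem laplaceRecipOneAdd_le {ε : ℝ} (hε : 0 < ε) :
    laplaceRecipOneAdd ε ≤ log (1 + ε⁻¹) + 1 := by
  set T := ε⁻¹
  have hT : 0 < T := inv_pos.2 hε
  set f : ℝ → ℝ := fun w => exp (-(ε * w)) / (1 + w)
  have hf := integrableOn_laplaceRecipOneAdd hε
  have head : ∫ w in Ioc 0 T, f w ≤ log (1 + T) := by
    have hrecip : IntegrableOn (fun w : ℝ => (1 + w)⁻¹) (Ioc 0 T) :=
      ((continuousOn_const.add continuousOn_id).inv₀ fun w (hw : w ∈ Icc 0 T) =>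
        (add_pos_of_pos_of_nonneg one_pos hw.1).ne').integrableOn_Icc.mono_set Ioc_subset_Icc_self
    calc ∫ w in Ioc 0 T, f w ≤ ∫ w in Ioc 0 T, (1 + w)⁻¹ :=
          setIntegral_mono_on (hf.mono_set Ioc_subset_Ioi_self) hrecip measurableSet_Ioc
            fun w hw => by
              show exp (-(ε * w)) / (1 + w) ≤ _
              rw [div_eq_mul_inv]
              exact mul_le_of_le_one_left (inv_nonneg.2 (by linarith [hw.1]))
                (exp_le_one_iff.2 (by nlinarith [hw.1]))
      _ = log (1 + T) := by
          rw [← intervalIntegral.integral_of_le hT.le,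
            intervalIntegral.integral_comp_add_left (fun w => w⁻¹),
            integral_inv_of_pos (by norm_num) (by positivity), add_zero, div_one]
  have tail : ∫ w in Ioi T, f w ≤ 1 := by
    calc ∫ w in Ioi T, f w ≤ ∫ w in Ioi T, ε * exp (-ε * w) :=
          setIntegral_mono_on (hf.mono_set (Ioi_subset_Ioi hT.le))
            ((exp_neg_integrableOn_Ioi T hε).const_mul ε) measurableSet_Ioi
            fun w (hw : T < w) => by
              have hεw : 1 ≤ ε * (1 + w) :=
                calc 1 = ε * T := (mul_inv_cancel₀ hε.ne').symm
                  _ ≤ ε * (1 + w) := by gcongr; linarith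
              rw [div_le_iff₀ (by linarith), neg_mul]
              nlinarith [exp_pos (-(ε * w))]
      _ = exp (-1) := by
          rw [integral_const_mul, integral_exp_mul_Ioi (neg_lt_zero.2 hε), neg_mul,
            mul_inv_cancel₀ hε.ne']
          field_simp
      _ ≤ 1 := exp_le_one_iff.2 (by norm_num)
  rw [laplaceRecipOneAdd, ← Ioc_union_Ioi_eq_Ioi hT.le,
    setIntegral_union (Ioc_disjoint_Ioi le_rfl) measurableSet_Ioi
      (hf.mono_set Ioc_subset_Ioi_self) (hf.mono_set (Ioi_subset_Ioi hT.le))]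
  exact add_le_add head tail

theorem log_one_add_four_mul_sq_add_one_le {a : ℝ} (ha : 2 ≤ a) :
    log (1 + (1 / (4 * a ^ 2))⁻¹) + 1 ≤ 7 * log a := by
  have hlog2 : 1 / 2 ≤ log a := by
    linarith [log_two_gt_d9, log_le_log two_pos ha]
  have hpow : 1 + (1 / (4 * a ^ 2))⁻¹ ≤ a ^ 5 := by
    rw [one_div, inv_inv]
    nlinarith [pow_le_pow_left₀ zero_le_two ha 3, pow_pos (by linarith : (0 : ℝ) < a) 2]
  calc log (1 + (1 / (4 * a ^ 2))⁻¹) + 1 ≤ log (a ^ 5) + 2 * log a :=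
        add_le_add (log_le_log (by positivity) hpow) (by linarith)
    _ = 7 * log a := by rw [log_pow]; ring

theorem statement5 :
    ∃ C > (0 : ℝ), ∀ a : ℝ, 2 ≤ a →
      |(∫ u in Ioi (0 : ℝ), Real.exp (-(u ^ 2) / 4) * Z0r (u * a) * u) +
          (2 / a ^ 4) * (EiNeg (1 / (4 * a ^ 2)) + 1)| ≤
        C * a ^ (-6 : ℤ) * Real.log a := by
  refine ⟨7, by norm_num, fun a ha => ?_⟩
  have ha0 : 0 < a := by linarith
  set ε := 1 / (4 * a ^ 2) with hε_def
  have hε : 0 < ε := by positivity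
  -- the integral is `(2/a⁴)((1 + ε) L(ε) - 1)` and the other term `(2/a⁴)(1 - e^{-ε} L(ε))`
  have hcancel : (∫ u in Ioi (0 : ℝ), exp (-(u ^ 2) / 4) * Z0r (u * a) * u) +
      2 / a ^ 4 * (EiNeg ε + 1) = 2 / a ^ 4 * laplaceRecipOneAdd ε * (1 + ε - exp (-ε)) := by
    rw [integral_exp_neg_sq_mul_Z0r_mul ha0.ne', integral_exp_neg_mul_Z0rSq hε, EiNeg,
      integral_exp_neg_div_Ioi hε, hε_def]
    field_simp
    ring
  have hgap : 0 ≤ 1 + ε - exp (-ε) := by linarith [exp_le_one_iff.2 (neg_nonpos.2 hε.le)]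
  have hgap' : 1 + ε - exp (-ε) ≤ 2 * ε := by linarith [add_one_le_exp (-ε)]
  have hL0 := laplaceRecipOneAdd_nonneg ε
  have hL := (laplaceRecipOneAdd_le hε).trans (log_one_add_four_mul_sq_add_one_le ha)
  rw [hcancel, abs_of_nonneg (by positivity)]
  calc 2 / a ^ 4 * laplaceRecipOneAdd ε * (1 + ε - exp (-ε))
      ≤ 2 / a ^ 4 * (7 * log a) * (2 * ε) := by
        gcongr
        exact mul_nonneg (by positivity) (hL0.trans hL)
    _ = 7 * a ^ (-6 : ℤ) * log a := by
        rw [zpow_neg, hε_def]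
        field_simp
        ring
end
end

section
/- Let σ > 1 and let I ⊆ ℝ be an open interval. Suppose φ : ℝ² × I → ℝ is such that each φ(·,τ) is continuous with ∫_{ℝ²} φ(y,τ) dy = 0 and |φ(y,τ)| ≤ (1+|y|)^{−2−σ}, and φ is differentiable in τ with |∂_τφ(y,τ)| ≤ (1+|y|)^{−2−σ}. For each τ set g^⊥(·,τ) = φ(·,τ)/U − (−Δ)⁻¹φ(·,τ) + a(τ), where a(τ) = (1/(8π)) ∫_{ℝ²} Γ₀ φ(y,τ) dy. Then τ ↦ ∫_{ℝ²} φ(·,τ) g^⊥(·,τ) dy is differentiable on I and ∫_{ℝ²} ∂_τφ(·,τ) g^⊥(·,τ) dy = (1/2) (d/dτ) ∫_{ℝ²} φ(·,τ) g^⊥(·,τ) dy. -/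
/-!
Since `∫ φ(·,τ) = 0` on `I`, the constant `a(τ)` drops out: `∫ φ g^⊥ = Q(φ, φ)` for the
symmetric bilinear form `Q(ψ, f) = ∫ ψ f / U - (1/2π) ∬ log(1/|y-z|) ψ(y) f(z)`, and likewise
`∫ ∂_τφ g^⊥ = Q(∂_τφ, φ)` because `∫ ∂_τφ = 0`. Differentiating under the integral sign gives
`d/dτ Q(φ, φ) = 2 Q(∂_τφ, φ)`. The dominating functions come from `φ² / U ≲ (1+|y|)^(-2σ)`,
integrable as `σ > 1`, and from
`|log |y-z|| ≤ 1_{|y-z|<1} |log |y-z|| + log (1+|y|) + log (1+|z|)`: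
a locally integrable convolution kernel plus a logarithmic growth absorbed by the decay of `φ`.
-/

noncomputable section

open MeasureTheory Real Filter Set Topology

abbrev R2 : Type := EuclideanSpace ℝ (Fin 2)

/-- the steady state `U(y) = 8/(1+|y|²)²`. -/
def U2 (y : R2) : ℝ := 8 / (1 + ‖y‖ ^ 2) ^ 2

/-- `Γ₀ = log U`. -/
def Γ0 (y : R2) : ℝ := Real.log (U2 y)

/-- logarithmic Newtonian potential `(-Δ)⁻¹φ`. -/
def invLap (φ : R2 → ℝ) (y : R2) : ℝ :=
  (1 / (2 * π)) * ∫ z : R2, Real.log (1 / ‖y - z‖) * φ z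

section LogKernel

lemma abs_log_norm_sub_le {E : Type*} [SeminormedAddCommGroup E] (x y : E) :
    |Real.log ‖x - y‖| ≤ ‖(Metric.ball (0 : E) 1).indicator (fun u => Real.log ‖u‖) (x - y)‖ +
      (Real.log (1 + ‖x‖) + Real.log (1 + ‖y‖)) := by
  have hx : 0 ≤ Real.log (1 + ‖x‖) := Real.log_nonneg (by linarith [norm_nonneg x])
  have hy : 0 ≤ Real.log (1 + ‖y‖) := Real.log_nonneg (by linarith [norm_nonneg y])
  rcases lt_or_ge ‖x - y‖ 1 with hlt | hge
  · rw [indicator_of_mem (mem_ball_zero_iff.mpr hlt), Real.norm_eq_abs]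
    linarith
  · have hxy : ‖x - y‖ ≤ (1 + ‖x‖) * (1 + ‖y‖) := by
      nlinarith [norm_sub_le x y, norm_nonneg x, norm_nonneg y]
    have hlog := Real.log_le_log (by linarith) hxy
    rw [Real.log_mul (by positivity) (by positivity)] at hlog
    rw [abs_of_nonneg (Real.log_nonneg hge)]
    linarith [norm_nonneg ((Metric.ball (0 : E) 1).indicator (fun u => Real.log ‖u‖) (x - y))]

lemma integral_comp_norm_sub_mul_mul_comm {E : Type*} [SeminormedAddCommGroup E]
    [MeasurableSpace E] {μ : Measure E} [SFinite μ] (k : ℝ → ℝ) (f g : E → ℝ) :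
    ∫ p : E × E, k ‖p.1 - p.2‖ * (f p.1 * g p.2) ∂μ.prod μ =
      ∫ p : E × E, k ‖p.1 - p.2‖ * (g p.1 * f p.2) ∂μ.prod μ := by
  rw [← integral_prod_swap]
  congr 1 with p
  rw [Prod.fst_swap, Prod.snd_swap, norm_sub_rev]
  ring

variable {E : Type*} [NormedAddCommGroup E] [NormedSpace ℝ E] [FiniteDimensional ℝ E]
  [MeasurableSpace E] [BorelSpace E] {μ : Measure E} [μ.IsAddHaarMeasure]

lemma integrable_log_one_add_norm_mul_rpow {r : ℝ} (hr : (Module.finrank ℝ E : ℝ) < r) :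
    Integrable (fun x : E => Real.log (1 + ‖x‖) * (1 + ‖x‖) ^ (-r)) μ := by
  set ε := (r - Module.finrank ℝ E) / 2 with hε_def
  have hε : 0 < ε := by linarith
  refine ((integrable_one_add_norm (μ := μ) (r := r - ε) (by linarith)).const_mul ε⁻¹).mono'
    (Continuous.aestronglyMeasurable ?_) (ae_of_all _ fun x => ?_)
  · have hpos : ∀ x : E, 1 + ‖x‖ ≠ 0 := fun x => by positivity
    exact ((continuous_const.add continuous_norm).log hpos).mul
      ((continuous_const.add continuous_norm).rpow_const fun x => Or.inl (hpos x))
  · have hx : 0 < 1 + ‖x‖ := by positivity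
    rw [Real.norm_eq_abs, abs_of_nonneg (mul_nonneg (Real.log_nonneg (by linarith [norm_nonneg x]))
      (Real.rpow_nonneg hx.le _))]
    calc Real.log (1 + ‖x‖) * (1 + ‖x‖) ^ (-r)
        ≤ (1 + ‖x‖) ^ ε / ε * (1 + ‖x‖) ^ (-r) := by
          gcongr; exact Real.log_le_rpow_div hx.le hε
      _ = ε⁻¹ * (1 + ‖x‖) ^ (-(r - ε)) := by
          rw [div_mul_eq_mul_div, ← Real.rpow_add hx, div_eq_inv_mul]; ring_nf

lemma integrableOn_ball_log_norm (hE : 1 ≤ Module.finrank ℝ E) :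
    IntegrableOn (fun x : E => Real.log ‖x‖) (Metric.ball 0 1) μ := by
  refine integrableOn_ball_of_norm_le_rpow (C := 2) (α := 1 / 2) hE
    (by norm_cast at hE ⊢; linarith [show (1 : ℝ) ≤ Module.finrank ℝ E by exact_mod_cast hE])
    ((ae_restrict_iff' measurableSet_ball).2 (ae_of_all _ fun x hx => ?_))
    continuous_norm.measurable.log.aestronglyMeasurable
  have hx1 : ‖x‖ ≤ 1 := (mem_ball_zero_iff.mp hx).le
  -- `-log t = log t⁻¹ ≤ 2 (t⁻¹) ^ (1/2)`, which also holds at `t = 0` thanks to `log 0 = 0`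
  have h := Real.log_le_rpow_div (inv_nonneg.mpr (norm_nonneg x)) (by norm_num : (0 : ℝ) < 1 / 2)
  rw [Real.log_inv, Real.inv_rpow (norm_nonneg x), ← Real.rpow_neg (norm_nonneg x)] at h
  rw [Real.norm_eq_abs, abs_of_nonpos (Real.log_nonpos (norm_nonneg x) hx1)]
  linarith

lemma integrable_abs_log_norm_sub_mul_mul (hE : 1 ≤ Module.finrank ℝ E) {w : E → ℝ}
    (hw_nonneg : ∀ x, 0 ≤ w x) (hw_le_one : ∀ x, w x ≤ 1) (hw : Integrable w μ)
    (hlogw : Integrable (fun x => Real.log (1 + ‖x‖) * w x) μ) :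
    Integrable (fun p : E × E => |Real.log ‖p.1 - p.2‖| * (w p.1 * w p.2)) (μ.prod μ) := by
  set s := (Metric.ball (0 : E) 1).indicator fun u => Real.log ‖u‖
  have hs : Integrable s μ :=
    (integrable_indicator_iff measurableSet_ball).2 (integrableOn_ball_log_norm hE)
  have hnear : Integrable (fun p : E × E => w p.2 * ‖s (p.1 - p.2)‖) (μ.prod μ) :=
    hw.convolution_integrand (ContinuousLinearMap.mul ℝ ℝ) hs.norm
  have hfar : Integrable (fun p : E × E =>
      Real.log (1 + ‖p.1‖) * w p.1 * w p.2 + w p.1 * (Real.log (1 + ‖p.2‖) * w p.2)) (μ.prod μ) :=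
    (hlogw.mul_prod hw).add (hw.mul_prod hlogw)
  refine (hnear.add hfar).mono' ?_ (ae_of_all _ fun p => ?_)
  · exact (continuous_fst.sub continuous_snd).norm.measurable.log.aestronglyMeasurable.norm.mul
      (hw.aestronglyMeasurable.comp_fst.mul hw.aestronglyMeasurable.comp_snd)
  · have hK := abs_log_norm_sub_le p.1 p.2
    have h1 := hw_nonneg p.1
    have h2 := hw_nonneg p.2
    rw [Pi.add_apply, Real.norm_eq_abs, abs_of_nonneg (by positivity)]
    -- the local singularity is paid for by `w p.1 ≤ 1`
    nlinarith [mul_le_mul_of_nonneg_right hK (mul_nonneg h1 h2),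
      mul_nonneg (mul_nonneg (norm_nonneg (s (p.1 - p.2))) h2) (sub_nonneg.2 (hw_le_one p.1))]

end LogKernel

section ParametricIntegral

variable {α : Type*} [MeasurableSpace α] {μ : Measure α}

lemma aestronglyMeasurable_of_hasDerivAt {f : α → ℝ → ℝ} {f' : α → ℝ} {s : Set ℝ} {τ : ℝ}
    (hs : s ∈ 𝓝 τ) (hf : ∀ t ∈ s, AEStronglyMeasurable (f · t) μ)
    (hderiv : ∀ x, HasDerivAt (f x) (f' x) τ) :
    AEStronglyMeasurable f' μ := by
  classical
  refine aestronglyMeasurable_of_tendsto_ae (𝓝[≠] τ)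
    (f := fun t x => if t ∈ s then slope (f x) τ t else 0) (fun t => ?_)
    (ae_of_all _ fun x => ?_)
  · split_ifs with ht
    · simp only [slope_def_field]
      exact ((hf t ht).sub (hf τ (mem_of_mem_nhds hs))).mul aestronglyMeasurable_const
    · exact aestronglyMeasurable_const
  · refine (hasDerivAt_iff_tendsto_slope.mp (hderiv x)).congr' ?_
    filter_upwards [nhdsWithin_le_nhds hs] with t ht
    rw [if_pos ht]

lemma hasDerivAt_integral_of_abs_le {f f' : α → ℝ → ℝ} {A : α → ℝ} {s : Set ℝ} {τ : ℝ}
    (hs : s ∈ 𝓝 τ) (hf_meas : ∀ t ∈ s, AEStronglyMeasurable (f · t) μ) (hA : Integrable A μ)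
    (hf : ∀ t ∈ s, ∀ x, |f x t| ≤ A x) (hf' : ∀ t ∈ s, ∀ x, |f' x t| ≤ A x)
    (hderiv : ∀ t ∈ s, ∀ x, HasDerivAt (f x) (f' x t) t) :
    HasDerivAt (fun t => ∫ x, f x t ∂μ) (∫ x, f' x τ ∂μ) τ := by
  have hτ := mem_of_mem_nhds hs
  exact (hasDerivAt_integral_of_dominated_loc_of_deriv_le (F := fun t x => f x t) hs
    (eventually_of_mem hs hf_meas) (hA.mono' (hf_meas τ hτ) (ae_of_all _ (hf τ hτ)))
    (aestronglyMeasurable_of_hasDerivAt hs hf_meas (hderiv τ hτ))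
    (ae_of_all _ fun x t ht => hf' t ht x) hA (ae_of_all _ fun x t ht => hderiv t ht x)).2

lemma integrable_mul_mul_of_abs_le {k f g A B : α → ℝ} (hk : AEStronglyMeasurable k μ)
    (hf : AEStronglyMeasurable f μ) (hg : AEStronglyMeasurable g μ)
    (hfA : ∀ x, |f x| ≤ A x) (hgB : ∀ x, |g x| ≤ B x)
    (hint : Integrable (fun x => |k x| * (A x * B x)) μ) :
    Integrable (fun x => k x * (f x * g x)) μ :=
  hint.mono' (hk.mul (hf.mul hg)) (ae_of_all _ fun x => by
    rw [Real.norm_eq_abs, abs_mul, abs_mul]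
    exact mul_le_mul_of_nonneg_left
      (mul_le_mul (hfA x) (hgB x) (abs_nonneg _) ((abs_nonneg _).trans (hfA x))) (abs_nonneg _))

lemma hasDerivAt_integral_mul_mul {k A B : α → ℝ} {f f' g g' : α → ℝ → ℝ} {s : Set ℝ} {τ : ℝ}
    (hs : s ∈ 𝓝 τ) (hk : AEStronglyMeasurable k μ)
    (hf_meas : ∀ t ∈ s, AEStronglyMeasurable (f · t) μ)
    (hg_meas : ∀ t ∈ s, AEStronglyMeasurable (g · t) μ)
    (hint : Integrable (fun x => |k x| * (A x * B x)) μ)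
    (hf : ∀ t ∈ s, ∀ x, |f x t| ≤ A x) (hf' : ∀ t ∈ s, ∀ x, |f' x t| ≤ A x)
    (hg : ∀ t ∈ s, ∀ x, |g x t| ≤ B x) (hg' : ∀ t ∈ s, ∀ x, |g' x t| ≤ B x)
    (hf_deriv : ∀ t ∈ s, ∀ x, HasDerivAt (f x) (f' x t) t)
    (hg_deriv : ∀ t ∈ s, ∀ x, HasDerivAt (g x) (g' x t) t) :
    HasDerivAt (fun t => ∫ x, k x * (f x t * g x t) ∂μ)
      ((∫ x, k x * (f' x τ * g x τ) ∂μ) + ∫ x, k x * (f x τ * g' x τ) ∂μ) τ := by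
  have hτ := mem_of_mem_nhds hs
  have hf'_meas := aestronglyMeasurable_of_hasDerivAt hs hf_meas (hf_deriv τ hτ)
  have hg'_meas := aestronglyMeasurable_of_hasDerivAt hs hg_meas (hg_deriv τ hτ)
  rw [← integral_add
    (integrable_mul_mul_of_abs_le hk hf'_meas (hg_meas τ hτ) (hf' τ hτ) (hg τ hτ) hint)
    (integrable_mul_mul_of_abs_le hk (hf_meas τ hτ) hg'_meas (hf τ hτ) (hg' τ hτ) hint)]
  have hprod : ∀ t ∈ s, ∀ x {a b : ℝ}, |a| ≤ A x → |b| ≤ B x →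
      |k x * (a * b)| ≤ |k x| * (A x * B x) :=
    fun t ht x a b ha hb => by
      rw [abs_mul, abs_mul]
      exact mul_le_mul_of_nonneg_left
        (mul_le_mul ha hb (abs_nonneg _) ((abs_nonneg _).trans (hf t ht x))) (abs_nonneg _)
  refine hasDerivAt_integral_of_abs_le (f := fun x t => k x * (f x t * g x t))
    (f' := fun x t => k x * (f' x t * g x t) + k x * (f x t * g' x t))
    (A := fun x => 2 * (|k x| * (A x * B x))) hs
    (fun t ht => hk.mul ((hf_meas t ht).mul (hg_meas t ht))) (hint.const_mul 2)
    (fun t ht x => ?_) (fun t ht x => ?_) (fun t ht x => ?_)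
  · linarith [hprod t ht x (hf t ht x) (hg t ht x), abs_nonneg (k x * (f x t * g x t))]
  · linarith [abs_add_le (k x * (f' x t * g x t)) (k x * (f x t * g' x t)),
      hprod t ht x (hf' t ht x) (hg t ht x), hprod t ht x (hf t ht x) (hg' t ht x)]
  · exact (((hf_deriv t ht x).mul (hg_deriv t ht x)).const_mul (k x)).congr_deriv (mul_add _ _ _)

end ParametricIntegral

def weight (σ : ℝ) (y : R2) : ℝ := (1 + ‖y‖) ^ (-(2 + σ))

lemma weight_nonneg (σ : ℝ) (y : R2) : 0 ≤ weight σ y := Real.rpow_nonneg (by positivity) _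

lemma weight_le_one {σ : ℝ} (hσ : 0 ≤ 2 + σ) (y : R2) : weight σ y ≤ 1 :=
  Real.rpow_le_one_of_one_le_of_nonpos (by linarith [norm_nonneg y]) (by linarith)

lemma finrank_R2 : Module.finrank ℝ R2 = 2 := finrank_euclideanSpace_fin

lemma integrable_weight {σ : ℝ} (hσ : 0 < σ) : Integrable (weight σ) :=
  integrable_one_add_norm (by rw [finrank_R2]; push_cast; linarith)

lemma integrable_log_mul_weight {σ : ℝ} (hσ : 0 < σ) :
    Integrable fun y : R2 => Real.log (1 + ‖y‖) * weight σ y :=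
  integrable_log_one_add_norm_mul_rpow (by rw [finrank_R2]; push_cast; linarith)

lemma inv_U2 (y : R2) : (U2 y)⁻¹ = (1 + ‖y‖ ^ 2) ^ 2 / 8 := inv_div _ _

lemma continuous_inv_U2 : Continuous fun y : R2 => (U2 y)⁻¹ := by
  simp only [inv_U2]; fun_prop

lemma integrable_abs_inv_U2_mul_weight_sq {σ : ℝ} (hσ : 1 < σ) :
    Integrable fun y : R2 => |(U2 y)⁻¹| * (weight σ y * weight σ y) := by
  refine ((integrable_one_add_norm (μ := (volume : Measure R2)) (r := 2 * σ)
    (by rw [finrank_R2]; push_cast; linarith)).const_mul (1 / 8)).mono'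
    (continuous_inv_U2.abs.aestronglyMeasurable.mul
      ((integrable_weight (by linarith)).aestronglyMeasurable.mul
        (integrable_weight (by linarith)).aestronglyMeasurable))
    (ae_of_all _ fun y => ?_)
  have hy : 0 < 1 + ‖y‖ := by positivity
  have hw := weight_nonneg σ y
  have hU : (U2 y)⁻¹ ≤ (1 + ‖y‖) ^ (4 : ℕ) / 8 := by
    rw [inv_U2, show (1 + ‖y‖) ^ 4 = ((1 + ‖y‖) ^ 2) ^ 2 by ring]
    gcongr
    nlinarith [norm_nonneg y]
  have hpow : (1 + ‖y‖) ^ (4 : ℕ) * (weight σ y * weight σ y) = (1 + ‖y‖) ^ (-(2 * σ)) := by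
    rw [weight, ← Real.rpow_natCast, ← Real.rpow_add hy, ← Real.rpow_add hy]
    norm_num; ring_nf
  rw [Real.norm_eq_abs, abs_mul, abs_abs, abs_of_nonneg (by rw [inv_U2]; positivity),
    abs_of_nonneg (mul_nonneg hw hw)]
  calc (U2 y)⁻¹ * (weight σ y * weight σ y)
      ≤ (1 + ‖y‖) ^ (4 : ℕ) / 8 * (weight σ y * weight σ y) := by gcongr
    _ = 1 / 8 * (1 + ‖y‖) ^ (-(2 * σ)) := by rw [← hpow]; ring

lemma integrable_abs_log_kernel_mul_weight {σ : ℝ} (hσ : 0 < σ) :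
    Integrable fun p : R2 × R2 => |Real.log (1 / ‖p.1 - p.2‖)| * (weight σ p.1 * weight σ p.2) := by
  rw [Measure.volume_eq_prod]
  simpa only [one_div, Real.log_inv, abs_neg] using
    integrable_abs_log_norm_sub_mul_mul (μ := volume) (by rw [finrank_R2]; norm_num)
      (weight_nonneg σ) (weight_le_one (by linarith)) (integrable_weight hσ)
      (integrable_log_mul_weight hσ)

lemma measurable_log_kernel : Measurable fun p : R2 × R2 => Real.log (1 / ‖p.1 - p.2‖) := by
  fun_prop

/-- The polarized second variation at `U` of the free energy `∫ ρ log ρ - ½ ∫ ρ (-Δ)⁻¹ρ`. -/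
def freeEnergyHessian (ψ f : R2 → ℝ) : ℝ :=
  (∫ y, (U2 y)⁻¹ * (ψ y * f y)) -
    1 / (2 * π) * ∫ p : R2 × R2, Real.log (1 / ‖p.1 - p.2‖) * (ψ p.1 * f p.2)

lemma integral_mul_sub_invLap_add {σ : ℝ} (hσ : 1 < σ) {ψ f : R2 → ℝ}
    (hψ : AEStronglyMeasurable ψ) (hf : AEStronglyMeasurable f)
    (hψw : ∀ y, |ψ y| ≤ weight σ y) (hfw : ∀ y, |f y| ≤ weight σ y) (c : ℝ) :
    ∫ y, ψ y * (f y / U2 y - invLap f y + c) = freeEnergyHessian ψ f + c * ∫ y, ψ y := by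
  have hK : Integrable (fun p : R2 × R2 => Real.log (1 / ‖p.1 - p.2‖) * (ψ p.1 * f p.2))
      (volume.prod volume) :=
    integrable_mul_mul_of_abs_le measurable_log_kernel.aestronglyMeasurable hψ.comp_fst
      hf.comp_snd (fun p => hψw p.1) (fun p => hfw p.2)
      (integrable_abs_log_kernel_mul_weight (by linarith))
  have hU : Integrable fun y => (U2 y)⁻¹ * (ψ y * f y) :=
    integrable_mul_mul_of_abs_le continuous_inv_U2.aestronglyMeasurable hψ hf hψw hfw
      (integrable_abs_inv_U2_mul_weight_sq hσ)
  have hψ_int : Integrable ψ := (integrable_weight (by linarith)).mono' hψ (ae_of_all _ hψw)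
  have hinvLap : ∀ y, ψ y * invLap f y =
      1 / (2 * π) * ∫ z, Real.log (1 / ‖y - z‖) * (ψ y * f z) := fun y => by
    rw [invLap, mul_left_comm, ← integral_const_mul]
    congr 2 with z
    ring
  calc ∫ y, ψ y * (f y / U2 y - invLap f y + c)
      = ∫ y, ((U2 y)⁻¹ * (ψ y * f y) -
          1 / (2 * π) * ∫ z, Real.log (1 / ‖y - z‖) * (ψ y * f z)) + c * ψ y := by
        congr with y
        rw [← hinvLap]
        ring
    _ = freeEnergyHessian ψ f + c * ∫ y, ψ y := by
        rw [integral_add (hU.sub' (hK.integral_prod_left.const_mul _)) (hψ_int.const_mul c),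
          integral_sub hU (hK.integral_prod_left.const_mul _), integral_const_mul,
          integral_const_mul, integral_integral hK]
        rfl

lemma hasDerivAt_freeEnergyHessian_self {σ : ℝ} (hσ : 1 < σ) {s : Set ℝ} {τ : ℝ} (hs : s ∈ 𝓝 τ)
    {φ φ' : R2 → ℝ → ℝ} (hφ_meas : ∀ t ∈ s, AEStronglyMeasurable (φ · t))
    (hφ : ∀ t ∈ s, ∀ y, |φ y t| ≤ weight σ y) (hφ' : ∀ t ∈ s, ∀ y, |φ' y t| ≤ weight σ y)
    (hderiv : ∀ t ∈ s, ∀ y, HasDerivAt (φ y) (φ' y t) t) :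
    HasDerivAt (fun t => freeEnergyHessian (φ · t) (φ · t))
      (2 * freeEnergyHessian (φ' · τ) (φ · τ)) τ := by
  have hU := hasDerivAt_integral_mul_mul hs continuous_inv_U2.aestronglyMeasurable hφ_meas
    hφ_meas (integrable_abs_inv_U2_mul_weight_sq hσ) hφ hφ' hφ hφ' hderiv hderiv
  have hK := hasDerivAt_integral_mul_mul (μ := volume.prod volume) (f := fun p t => φ p.1 t)
    (g := fun p t => φ p.2 t) hs measurable_log_kernel.aestronglyMeasurable
    (fun t ht => (hφ_meas t ht).comp_fst) (fun t ht => (hφ_meas t ht).comp_snd)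
    (integrable_abs_log_kernel_mul_weight (by linarith))
    (fun t ht p => hφ t ht p.1) (fun t ht p => hφ' t ht p.1)
    (fun t ht p => hφ t ht p.2) (fun t ht p => hφ' t ht p.2)
    (fun t ht p => hderiv t ht p.1) (fun t ht p => hderiv t ht p.2)
  have hswap :
      ∫ p : R2 × R2, Real.log (1 / ‖p.1 - p.2‖) * (φ p.1 τ * φ' p.2 τ) ∂volume.prod volume =
        ∫ p : R2 × R2, Real.log (1 / ‖p.1 - p.2‖) * (φ' p.1 τ * φ p.2 τ) ∂volume.prod volume :=
    integral_comp_norm_sub_mul_mul_comm (fun r => Real.log (1 / r)) (φ · τ) (φ' · τ)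
  rw [hswap] at hK
  refine (hU.sub (hK.const_mul (1 / (2 * π)))).congr_deriv ?_
  have hcomm : ∫ y, (U2 y)⁻¹ * (φ y τ * φ' y τ) = ∫ y, (U2 y)⁻¹ * (φ' y τ * φ y τ) := by
    simp only [mul_comm (φ _ τ)]
  rw [hcomm, freeEnergyHessian, Measure.volume_eq_prod]
  ring

theorem statement11_general (σ : ℝ) (hσ : 1 < σ)
    (I : Set ℝ) (hIopen : IsOpen I)
    (φ φτ : R2 → ℝ → ℝ)
    (hcont : ∀ τ ∈ I, Continuous fun y => φ y τ)
    (hmass : ∀ τ ∈ I, (∫ y : R2, φ y τ) = 0)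
    (hbound : ∀ (y : R2), ∀ τ ∈ I, |φ y τ| ≤ (1 + ‖y‖) ^ (-(2 + σ)))
    (hderiv : ∀ (y : R2), ∀ τ ∈ I, HasDerivAt (φ y) (φτ y τ) τ)
    (hbound' : ∀ (y : R2), ∀ τ ∈ I, |φτ y τ| ≤ (1 + ‖y‖) ^ (-(2 + σ)))
    (gperp : R2 → ℝ → ℝ)
    (hg : ∀ (y : R2) (τ : ℝ), gperp y τ =
      φ y τ / U2 y - invLap (fun z => φ z τ) y +
        (1 / (8 * π)) * ∫ z : R2, Γ0 z * φ z τ) :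
    ∀ τ ∈ I, HasDerivAt (fun τ' => ∫ y : R2, φ y τ' * gperp y τ')
      (2 * ∫ y : R2, φτ y τ * gperp y τ) τ := by
  intro τ hτ
  have hI : I ∈ 𝓝 τ := hIopen.mem_nhds hτ
  have hφ_meas : ∀ t ∈ I, AEStronglyMeasurable (φ · t) := fun t ht =>
    (hcont t ht).aestronglyMeasurable
  have hφ : ∀ t ∈ I, ∀ y, |φ y t| ≤ weight σ y := fun t ht y => hbound y t ht
  have hφτ : ∀ t ∈ I, ∀ y, |φτ y t| ≤ weight σ y := fun t ht y => hbound' y t ht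
  have hφ_deriv : ∀ t ∈ I, ∀ y, HasDerivAt (φ y) (φτ y t) t := fun t ht y => hderiv y t ht
  have hmass' : ∫ y, φτ y τ = 0 :=
    (hasDerivAt_integral_of_abs_le hI hφ_meas (integrable_weight (by linarith)) hφ hφτ
      hφ_deriv).unique ((hasDerivAt_const τ 0).congr_of_eventuallyEq (eventually_of_mem hI hmass))
  have hEq : (fun t => ∫ y, φ y t * gperp y t) =ᶠ[𝓝 τ]
      fun t => freeEnergyHessian (φ · t) (φ · t) := by
    filter_upwards [hI] with t ht
    simp only [hg]
    rw [integral_mul_sub_invLap_add hσ (hφ_meas t ht) (hφ_meas t ht) (hφ t ht) (hφ t ht),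
      hmass t ht, mul_zero, add_zero]
  rw [hEq.hasDerivAt_iff]
  simp only [hg]
  rw [integral_mul_sub_invLap_add hσ
    (aestronglyMeasurable_of_hasDerivAt hI hφ_meas (hφ_deriv τ hτ)) (hφ_meas τ hτ)
    (hφτ τ hτ) (hφ τ hτ), hmass', mul_zero, add_zero]
  exact hasDerivAt_freeEnergyHessian_self hσ hI hφ_meas hφ hφτ hφ_deriv

theorem statement11 (σ : ℝ) (hσ : 1 < σ)
    (I : Set ℝ) (hIopen : IsOpen I) (hIinterval : I.OrdConnected)
    (φ φτ : R2 → ℝ → ℝ)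
    (hcont : ∀ τ ∈ I, Continuous fun y => φ y τ)
    (hmass : ∀ τ ∈ I, (∫ y : R2, φ y τ) = 0)
    (hbound : ∀ (y : R2), ∀ τ ∈ I, |φ y τ| ≤ (1 + ‖y‖) ^ (-(2 + σ)))
    (hderiv : ∀ (y : R2), ∀ τ ∈ I, HasDerivAt (φ y) (φτ y τ) τ)
    (hbound' : ∀ (y : R2), ∀ τ ∈ I, |φτ y τ| ≤ (1 + ‖y‖) ^ (-(2 + σ)))
    (gperp : R2 → ℝ → ℝ)
    (hg : ∀ (y : R2) (τ : ℝ), gperp y τ =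
      φ y τ / U2 y - invLap (fun z => φ z τ) y +
        (1 / (8 * π)) * ∫ z : R2, Γ0 z * φ z τ) :
    ∀ τ ∈ I, HasDerivAt (fun τ' => ∫ y : R2, φ y τ' * gperp y τ')
      (2 * ∫ y : R2, φτ y τ * gperp y τ) τ :=
  statement11_general σ hσ I hIopen φ φτ hcont hmass hbound hderiv hbound' gperp hg
end
end

section
/- For every w ∈ ℝ⁶ with w ≠ 0, (1/(4π)³) ∫_{ℝ⁶} e^{−|z|²/4} |w − z|^{−4} dz = |w|^{−4} (1 − e^{−|w|²/4}(1 + |w|²/4)). -/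
/-!
Subordination: for `x ≠ 0`, `‖x‖⁻⁴ = ∫₀^∞ t e^{-t‖x‖²} dt`. Inserting this and exchanging the
integrals (the integrand is nonnegative), the inner integral over `z` is a convolution of two
Gaussians, `(4π)³ (4t+1)⁻³ exp (-t‖w‖² / (4t+1))`. After the substitution `s = t / (4t+1)` the
remaining integral is the elementary `∫₀^{1/4} s e^{-s‖w‖²} ds`.
-/

noncomputable section

open MeasureTheory Real Filter Set Topology

abbrev R6 : Type := EuclideanSpace ℝ (Fin 6)

open Module
open scoped RealInnerProductSpace

section Gaussian

variable {V : Type*} [NormedAddCommGroup V] [InnerProductSpace ℝ V] [FiniteDimensional ℝ V]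
  [MeasurableSpace V] [BorelSpace V]

theorem integral_rexp_neg_mul_sq_norm_add {b : ℝ} (hb : 0 < b) (c : ℝ) (w : V) :
    ∫ v : V, rexp (-b * ‖v‖ ^ 2 + c * ⟪w, v⟫) =
      (π / b) ^ (finrank ℝ V / 2 : ℝ) * rexp (c ^ 2 * ‖w‖ ^ 2 / (4 * b)) := by
  rw [← Complex.ofReal_inj, Complex.ofReal_mul, Complex.ofReal_exp,
    Complex.ofReal_cpow (by positivity), ← integral_complex_ofReal]
  convert GaussianFourier.integral_cexp_neg_mul_sq_norm_add (show 0 < (b : ℂ).re from hb) (c : ℂ) w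
    using 2 <;> push_cast <;> rfl

theorem integral_rexp_neg_mul_sq_norm_mul_rexp_neg_mul_sq_norm_sub {a b : ℝ} (ha : 0 < a)
    (hb : 0 < b) (w : V) :
    ∫ z : V, rexp (-a * ‖z‖ ^ 2) * rexp (-b * ‖w - z‖ ^ 2) =
      (π / (a + b)) ^ (finrank ℝ V / 2 : ℝ) * rexp (-(a * b / (a + b)) * ‖w‖ ^ 2) := by
  have hab : 0 < a + b := by positivity
  have hsplit : ∀ z : V, rexp (-a * ‖z‖ ^ 2) * rexp (-b * ‖w - z‖ ^ 2) =
      rexp (-b * ‖w‖ ^ 2) * rexp (-(a + b) * ‖z‖ ^ 2 + 2 * b * ⟪w, z⟫) := by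
    intro z
    rw [← Real.exp_add, ← Real.exp_add, norm_sub_sq_real]
    ring_nf
  simp_rw [hsplit]
  rw [integral_const_mul, integral_rexp_neg_mul_sq_norm_add hab, mul_left_comm, ← Real.exp_add]
  congr 2
  field_simp
  ring

theorem integrable_rexp_neg_mul_sq_norm_mul_rexp_neg_mul_sq_norm_sub {a b : ℝ} (ha : 0 < a)
    (hb : 0 < b) (w : V) :
    Integrable fun z : V ↦ rexp (-a * ‖z‖ ^ 2) * rexp (-b * ‖w - z‖ ^ 2) :=
  .of_integral_ne_zero <| by
    rw [integral_rexp_neg_mul_sq_norm_mul_rexp_neg_mul_sq_norm_sub ha hb]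
    have : 0 < a + b := by positivity
    positivity

end Gaussian

theorem integral_Ioi_mul_exp_neg_mul {a : ℝ} (ha : 0 < a) :
    ∫ t in Ioi (0 : ℝ), t * rexp (-(a * t)) = a ^ (-2 : ℤ) := by
  have h := integral_rpow_mul_exp_neg_mul_Ioi two_pos ha
  norm_num at h
  rw [h]
  simp

section Subordination

variable {V : Type*} [NormedAddCommGroup V] [InnerProductSpace ℝ V] [FiniteDimensional ℝ V]
  [Nontrivial V] [MeasurableSpace V] [BorelSpace V]

theorem integral_rexp_neg_mul_sq_norm_mul_norm_sub_zpow_neg_four {a : ℝ} (ha : 0 < a) (w : V)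
    (hint : IntegrableOn (fun t ↦ t * ((π / (a + t)) ^ (finrank ℝ V / 2 : ℝ) *
      rexp (-(a * t / (a + t)) * ‖w‖ ^ 2))) (Ioi 0)) :
    ∫ z : V, rexp (-a * ‖z‖ ^ 2) * ‖w - z‖ ^ (-4 : ℤ) =
      ∫ t in Ioi 0, t * ((π / (a + t)) ^ (finrank ℝ V / 2 : ℝ) *
        rexp (-(a * t / (a + t)) * ‖w‖ ^ 2)) := by
  set f : V → ℝ → ℝ := fun z t ↦ t * (rexp (-a * ‖z‖ ^ 2) * rexp (-t * ‖w - z‖ ^ 2))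
  have hsub : ∀ᵐ z : V, rexp (-a * ‖z‖ ^ 2) * ‖w - z‖ ^ (-4 : ℤ) = ∫ t in Ioi 0, f z t := by
    filter_upwards [compl_mem_ae_iff.mpr (measure_singleton w)] with z (hz : z ≠ w)
    have hwz : 0 < ‖w - z‖ ^ 2 := by
      have : w - z ≠ 0 := sub_ne_zero.mpr hz.symm
      positivity
    have hslice : (fun t ↦ f z t) =
        fun t ↦ rexp (-a * ‖z‖ ^ 2) * (t * rexp (-(‖w - z‖ ^ 2 * t))) := by
      funext t
      simp only [f, neg_mul, mul_comm t (‖w - z‖ ^ 2)]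
      ring
    rw [hslice, integral_const_mul, integral_Ioi_mul_exp_neg_mul hwz, ← zpow_natCast ‖w - z‖ 2,
      ← zpow_mul]
    norm_num
  have hconv : ∀ t ∈ Ioi (0 : ℝ), ∫ z, f z t = t * ((π / (a + t)) ^ (finrank ℝ V / 2 : ℝ) *
      rexp (-(a * t / (a + t)) * ‖w‖ ^ 2)) := fun t ht ↦ by
    rw [integral_const_mul, integral_rexp_neg_mul_sq_norm_mul_rexp_neg_mul_sq_norm_sub ha ht]
  have hf : Integrable (Function.uncurry f) (volume.prod (volume.restrict (Ioi 0))) := by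
    refine (integrable_prod_iff' (by unfold f; fun_prop)).mpr ⟨?_, ?_⟩
    · filter_upwards [ae_restrict_mem measurableSet_Ioi] with t ht
      exact (integrable_rexp_neg_mul_sq_norm_mul_rexp_neg_mul_sq_norm_sub ha ht w).const_mul t
    · refine hint.congr_fun_ae ?_
      filter_upwards [ae_restrict_mem measurableSet_Ioi] with t (ht : 0 < t)
      rw [← hconv t ht]
      congr 1 with z
      exact (Real.norm_of_nonneg (by positivity)).symm
  rw [integral_congr_ae hsub, integral_integral_swap hf]
  exact setIntegral_congr_fun measurableSet_Ioi hconv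

end Subordination

def mulExpNegPrimitive (b s : ℝ) : ℝ := -(rexp (-(b * s)) * (s / b + 1 / b ^ 2))

section OneDim

variable {b : ℝ}

theorem hasDerivAt_mulExpNegPrimitive (hb : b ≠ 0) (s : ℝ) :
    HasDerivAt (mulExpNegPrimitive b) (s * rexp (-(b * s))) s := by
  have hexp : HasDerivAt (fun s ↦ rexp (-(b * s))) (rexp (-(b * s)) * -b) s :=
    ((hasDerivAt_id s).const_mul b).neg.exp.congr_deriv (by simp)
  have hlin : HasDerivAt (fun s ↦ s / b + 1 / b ^ 2) (1 / b) s :=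
    ((hasDerivAt_id s).div_const b).add_const _
  refine (hexp.mul hlin).neg.congr_deriv ?_
  field_simp
  ring

theorem hasDerivAt_div_four_mul_add_one {t : ℝ} (ht : 4 * t + 1 ≠ 0) :
    HasDerivAt (fun t : ℝ ↦ t / (4 * t + 1)) ((4 * t + 1) ^ 2)⁻¹ t := by
  have hden : HasDerivAt (fun t : ℝ ↦ 4 * t + 1) 4 t := by
    simpa using ((hasDerivAt_id t).const_mul 4).add_const 1
  refine ((hasDerivAt_id t).div hden ht).congr_deriv ?_
  field_simp
  simp

theorem tendsto_div_four_mul_add_one_atTop :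
    Tendsto (fun t : ℝ ↦ t / (4 * t + 1)) atTop (𝓝 (1 / 4)) := by
  have h : Tendsto (fun t : ℝ ↦ (4 + t⁻¹)⁻¹) atTop (𝓝 (4 + 0)⁻¹) :=
    (tendsto_const_nhds.add tendsto_inv_atTop_zero).inv₀ (by norm_num)
  rw [show ((4 : ℝ) + 0)⁻¹ = 1 / 4 by norm_num] at h
  refine h.congr' ?_
  filter_upwards [eventually_gt_atTop 0] with t ht
  field_simp

theorem hasDerivAt_mulExpNegPrimitive_comp_div_four_mul_add_one (hb : b ≠ 0) {t : ℝ}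
    (ht : 0 ≤ t) :
    HasDerivAt (fun t ↦ mulExpNegPrimitive b (t / (4 * t + 1)))
      (t / (4 * t + 1) ^ 3 * rexp (-(b * (t / (4 * t + 1))))) t := by
  have ht' : 4 * t + 1 ≠ 0 := by positivity
  refine ((hasDerivAt_mulExpNegPrimitive hb _).comp t
    (hasDerivAt_div_four_mul_add_one ht')).congr_deriv ?_
  field_simp

theorem tendsto_mulExpNegPrimitive_comp_div_four_mul_add_one :
    Tendsto (fun t ↦ mulExpNegPrimitive b (t / (4 * t + 1))) atTop
      (𝓝 (mulExpNegPrimitive b (1 / 4))) :=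
  ((show Continuous (mulExpNegPrimitive b) by unfold mulExpNegPrimitive; fun_prop).tendsto _).comp
    tendsto_div_four_mul_add_one_atTop

theorem div_four_mul_add_one_pow_three_mul_exp_nonneg {t : ℝ} (ht : t ∈ Ioi 0) :
    0 ≤ t / (4 * t + 1) ^ 3 * rexp (-(b * (t / (4 * t + 1)))) := by
  have : 0 < t := ht
  positivity

theorem integrableOn_Ioi_div_four_mul_add_one_pow_three_mul_exp (hb : b ≠ 0) :
    IntegrableOn (fun t ↦ t / (4 * t + 1) ^ 3 * rexp (-(b * (t / (4 * t + 1))))) (Ioi 0) :=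
  integrableOn_Ioi_deriv_of_nonneg'
    (fun _ ↦ hasDerivAt_mulExpNegPrimitive_comp_div_four_mul_add_one hb)
    (fun _ ↦ div_four_mul_add_one_pow_three_mul_exp_nonneg)
    tendsto_mulExpNegPrimitive_comp_div_four_mul_add_one

theorem integral_Ioi_div_four_mul_add_one_pow_three_mul_exp (hb : b ≠ 0) :
    ∫ t in Ioi 0, t / (4 * t + 1) ^ 3 * rexp (-(b * (t / (4 * t + 1)))) =
      (1 - rexp (-b / 4) * (1 + b / 4)) / b ^ 2 := by
  rw [integral_Ioi_of_hasDerivAt_of_nonneg'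
    (fun _ ↦ hasDerivAt_mulExpNegPrimitive_comp_div_four_mul_add_one hb)
    (fun _ ↦ div_four_mul_add_one_pow_three_mul_exp_nonneg)
    tendsto_mulExpNegPrimitive_comp_div_four_mul_add_one]
  simp only [mulExpNegPrimitive, zero_div, mul_zero, neg_zero, exp_zero]
  field_simp
  ring_nf

end OneDim

theorem statement14 (w : R6) (hw : w ≠ 0) :
    (1 / (4 * π) ^ 3) * (∫ z : R6, Real.exp (-‖z‖ ^ 2 / 4) * ‖w - z‖ ^ (-4 : ℤ)) =
      ‖w‖ ^ (-4 : ℤ) * (1 - Real.exp (-‖w‖ ^ 2 / 4) * (1 + ‖w‖ ^ 2 / 4)) := by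
  have hb : ‖w‖ ^ 2 ≠ 0 := by positivity
  have hkernel : ∀ t ∈ Ioi (0 : ℝ), t * ((π / (1 / 4 + t)) ^ (finrank ℝ R6 / 2 : ℝ) *
      rexp (-(1 / 4 * t / (1 / 4 + t)) * ‖w‖ ^ 2)) =
      (4 * π) ^ 3 * (t / (4 * t + 1) ^ 3 * rexp (-(‖w‖ ^ 2 * (t / (4 * t + 1))))) := by
    intro t (ht : 0 < t)
    rw [finrank_euclideanSpace_fin, show ((6 : ℕ) / 2 : ℝ) = (3 : ℕ) by norm_num, rpow_natCast]
    have : 4 * t + 1 ≠ 0 := by positivity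
    field_simp
    ring_nf
  have hint := IntegrableOn.congr_fun
    ((integrableOn_Ioi_div_four_mul_add_one_pow_three_mul_exp hb).const_mul ((4 * π) ^ 3))
    (fun t ht ↦ (hkernel t ht).symm) measurableSet_Ioi
  simp_rw [show ∀ x : ℝ, -x / 4 = -(1 / 4) * x from fun x ↦ by ring]
  rw [integral_rexp_neg_mul_sq_norm_mul_norm_sub_zpow_neg_four (by norm_num) w hint,
    setIntegral_congr_fun measurableSet_Ioi hkernel, integral_const_mul,
    integral_Ioi_div_four_mul_add_one_pow_three_mul_exp hb]
  rw [show (-4 : ℤ) = -(2 * 2 : ℕ) by norm_num, zpow_neg, zpow_natCast, pow_mul]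
  field_simp
end
end
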